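/- For any x > 0 in a negative definite plumbing lattice with χ(x) ≤ 0, there exists a basis vector b_j in the support of x such that χ(x - b_j) ≤ 1. -/
import Mathlib


/-- The Riemann–Roch function `χ(x) = -(K(x) + (x,x))/2` of a plumbing lattice,
where `K(b_j) = -(b_j, b_j) - 2`. -/
noncomputable def chiRR {J : Type*} [Fintype J] (B : J → J → ℤ) (x : J → ℤ) : ℚ :=
  (-(∑ j, (x j : ℚ) * (-(B j j : ℚ) - 2)) - ∑ i, ∑ j, (x i : ℚ) * (B i j : ℚ) * (x j : ℚ)) / 2

lemma chi_sub_single {J : Type*} [Fintype J] [DecidableEq J] (B : J → J → ℤ)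
    (hsym : ∀ i j, B i j = B j i) (x : J → ℤ) (j : J) :
    chiRR B (x - Pi.single j 1) =
      chiRR B x + (∑ i, (x i : ℚ) * (B i j : ℚ)) - (B j j : ℚ) - 1 := by
  have h : ∀ i, (((x - Pi.single j 1 : J → ℤ)) i : ℚ) = (x i : ℚ) - if i = j then 1 else 0 := by
    intro i
    simp [Pi.sub_apply, Pi.single_apply, apply_ite (fun n : ℤ => (n : ℚ))]
  have hsymQ : ∀ k, (B j k : ℚ) = (B k j : ℚ) := fun k => by rw [hsym]
  unfold chiRR
  simp only [h, sub_mul, mul_sub, ite_mul, mul_ite, one_mul, mul_one, zero_mul, mul_zero,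
    Finset.sum_sub_distrib, Finset.sum_ite_eq, Finset.sum_ite_eq', Finset.mem_univ, if_true,
    hsymQ]
  have hdia : ∑ a : J, ∑ b : J, (if a = j then (B a b : ℚ) * (x b : ℚ) else 0)
      = ∑ b, (x b : ℚ) * (B b j : ℚ) := by
    rw [Finset.sum_comm]
    simp [hsymQ, mul_comm]
  rw [hdia]
  ring

lemma two_chi {J : Type*} [Fintype J] (B : J → J → ℤ) (x : J → ℤ) :
    2 * chiRR B x = ∑ j, (x j : ℚ) * ((B j j : ℚ) + 2 - ∑ i, (x i : ℚ) * (B i j : ℚ)) := by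
  have hcomm : ∑ i, ∑ j, (x i : ℚ) * (B i j : ℚ) * (x j : ℚ)
      = ∑ j, (∑ i, (x i : ℚ) * (B i j : ℚ)) * (x j : ℚ) := by
    rw [Finset.sum_comm]
    exact Finset.sum_congr rfl fun j _ => by rw [Finset.sum_mul]
  have hpt : ∀ j, (x j : ℚ) * ((B j j : ℚ) + 2 - ∑ i, (x i : ℚ) * (B i j : ℚ))
      = -((x j : ℚ) * (-(B j j : ℚ) - 2)) - (∑ i, (x i : ℚ) * (B i j : ℚ)) * (x j : ℚ) := by
    intro j; ring
  simp only [hpt, Finset.sum_sub_distrib, Finset.sum_neg_distrib, ← hcomm]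
  unfold chiRR
  ring

/-- for any `x > 0` with `χ(x) ≤ 0` there is a basis vector `b_j` in the
support of `x` with `χ(x - b_j) ≤ 1`. -/
theorem exists_chi_sub_le_one_of_chi_nonpos {J : Type*} [Fintype J] [DecidableEq J]
    (B : J → J → ℤ)
    (hsym : ∀ i j, B i j = B j i)
    (hoff : ∀ i j, i ≠ j → B i j = 0 ∨ B i j = 1)
    (hconn : (SimpleGraph.fromRel fun i j => B i j = 1).Connected)
    (hneg : ∀ x : J → ℤ, x ≠ 0 → ∑ i, ∑ j, x i * B i j * x j < 0)
    (x : J → ℤ) (hx : ∀ j, 0 ≤ x j) (hx0 : x ≠ 0)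
    (hchi : chiRR B x ≤ 0) :
    ∃ j, x j ≠ 0 ∧ chiRR B (x - Pi.single j 1) ≤ 1 := by
  set a : J → ℚ := fun j => (B j j : ℚ) + 2 - ∑ i, (x i : ℚ) * (B i j : ℚ) with ha
  have key : ∃ j, x j ≠ 0 ∧ chiRR B x ≤ a j := by
    by_contra hcon
    push_neg at hcon
    set S := Finset.univ.filter (fun j => x j ≠ 0) with hS
    have hSne : S.Nonempty := by
      obtain ⟨j, hj⟩ : ∃ j, x j ≠ 0 := by
        by_contra h; push_neg at h; exact hx0 (funext h)
      exact ⟨j, by simp [hS, hj]⟩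
    obtain ⟨j, hjS⟩ := hSne
    have hmem : ∀ l ∈ S, x l ≠ 0 := fun l hl => (Finset.mem_filter.1 hl).2
    have hterm : ∀ l ∈ S, (x l : ℚ) * a l < chiRR B x := by
      intro l hl
      have hxl : (1 : ℚ) ≤ (x l : ℚ) := by
        have h1 := hx l
        have h2 := hmem l hl
        exact_mod_cast (by omega : (1:ℤ) ≤ x l)
      have hal : a l < chiRR B x := hcon l (hmem l hl)
      have hal0 : a l ≤ 0 := le_of_lt (lt_of_lt_of_le hal hchi)
      calc (x l : ℚ) * a l ≤ 1 * a l := mul_le_mul_of_nonpos_right hxl hal0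
        _ = a l := one_mul _
        _ < chiRR B x := hal
    have hsum : 2 * chiRR B x = ∑ l ∈ S, (x l : ℚ) * a l := by
      rw [two_chi]
      exact (Finset.sum_subset S.subset_univ (fun l _ hl => by
        have : x l = 0 := by
          by_contra h; exact hl (by simp [hS, h])
        simp [this])).symm
    by_cases hone : ∀ k ∈ S, k = j
    · -- support is {j}
      have hxi : ∀ i, i ≠ j → x i = 0 := by
        intro i hi
        by_contra h
        exact hi (hone i (by simp [hS, h]))
      have hBjj : B j j < 0 := by
        have hsingle : (Pi.single j 1 : J → ℤ) ≠ 0 := by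
          intro h
          simpa using congrFun h j
        have := hneg (Pi.single j 1) hsingle
        simpa [Pi.single_apply, ite_mul, mul_ite, Finset.sum_ite_eq, Finset.sum_ite_eq'] using this
      have hpj : ∑ i, (x i : ℚ) * (B i j : ℚ) = (x j : ℚ) * (B j j : ℚ) := by
        rw [Finset.sum_eq_single j]
        · intro i _ hi; simp [hxi i hi]
        · simp
      have haj : a j = 2 + (1 - (x j : ℚ)) * (B j j : ℚ) := by
        rw [ha]; simp only [hpj]; ring
      have hxj1 : (1 : ℚ) ≤ (x j : ℚ) := by
        have h1 := hx j
        have h2 := hmem j hjS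
        exact_mod_cast (by omega : (1:ℤ) ≤ x j)
      have hB : (B j j : ℚ) ≤ -1 := by exact_mod_cast (by omega : B j j ≤ -1)
      have h2aj : 2 ≤ a j := by nlinarith
      have := hcon j (hmem j hjS)
      linarith
    · push_neg at hone
      obtain ⟨k, hkS, hkj⟩ := hone
      have hcard : 2 ≤ S.card := Finset.one_lt_card.mpr ⟨k, hkS, j, hjS, hkj⟩
      have hlt : ∑ l ∈ S, (x l : ℚ) * a l < ∑ l ∈ S, chiRR B x :=
        Finset.sum_lt_sum_of_nonempty ⟨j, hjS⟩ hterm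
      rw [Finset.sum_const, nsmul_eq_mul] at hlt
      have : (S.card : ℚ) * chiRR B x ≤ 2 * chiRR B x :=
        mul_le_mul_of_nonpos_right (by exact_mod_cast hcard) hchi
      linarith [hsum ▸ hlt]
  obtain ⟨j, hj, hle⟩ := key
  refine ⟨j, hj, ?_⟩
  rw [chi_sub_single B hsym x j]
  have hp : (∑ i, (x i : ℚ) * (B i j : ℚ)) = (B j j : ℚ) + 2 - a j := by
    rw [ha]; ring
  rw [hp]
  linarith
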